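/- arXiv:1612.02247 — 5 statements merged into one kernel-verified Lean document; each statement's English description precedes it below -/
import Mathlib

section
/- Let G be a non-archimedean Banach space over K with the following property: for every finite-dimensional non-archimedean normed space Y over K, every linear subspace X ⊆ Y and every isometric linear embedding j : X → G, there exists a linear isometry f : Y → G with ‖j − f|_X‖ < 1 (operator norm). Then G is of universal disposition for the class U_FNA; that is, for every such j there exists a linear isometry T : Y → G with T(x) = j(x) for all x ∈ X. -/
open Metric Set

noncomputable section

variable (K : Type) [NontriviallyNormedField K] [IsUltrametricDist K]

/-- A linear map is an `ε`-isometry if `(1+ε)⁻¹ < ‖f x‖ < 1+ε` whenever `‖x‖ = 1`. -/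
def IsEpsIsometry {E F : Type} [NormedAddCommGroup E] [NormedAddCommGroup F]
    [NormedSpace K E] [NormedSpace K F] (ε : ℝ) (f : E →ₗ[K] F) : Prop :=
  ∀ x : E, ‖x‖ = 1 → (1 + ε)⁻¹ < ‖f x‖ ∧ ‖f x‖ < 1 + ε

/-- A non-archimedean Banach space `E` over `K` is of almost universal disposition for the
class `U_FNA` of all finite-dimensional non-archimedean normed spaces over `K`. -/
def IsAUD (E : Type) [NormedAddCommGroup E] [NormedSpace K E] : Prop :=
  ∀ (Y : Type) [NormedAddCommGroup Y] [NormedSpace K Y] [IsUltrametricDist Y]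
    [FiniteDimensional K Y] (X : Submodule K E) (g : X →ₗ[K] Y),
    (∀ x : X, ‖g x‖ = ‖(x : E)‖) →
    ∀ ε : ℝ, 0 < ε → ε < 1 →
      ∃ f : Y →ₗ[K] E, IsEpsIsometry K ε f ∧ ∀ x : X, f (g (x : X)) = (x : E)

/-- `E` is of universal disposition for the class `U_FNA`. -/
def IsUD (E : Type) [NormedAddCommGroup E] [NormedSpace K E] : Prop :=
  ∀ (Y : Type) [NormedAddCommGroup Y] [NormedSpace K Y] [IsUltrametricDist Y]
    [FiniteDimensional K Y] (X : Submodule K E) (j : X →ₗ[K] Y),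
    (∀ x : X, ‖j x‖ = ‖(x : E)‖) →
      ∃ f : Y →ₗ[K] E, (∀ y : Y, ‖f y‖ = ‖y‖) ∧ ∀ x : X, f (j (x : X)) = (x : E)

/-- A normed space is of countable type if it contains a countable subset whose linear
span is dense. -/
def CountableType (E : Type) [NormedAddCommGroup E] [NormedSpace K E] : Prop :=
  ∃ S : Set E, S.Countable ∧ Dense ((Submodule.span K S : Submodule K E) : Set E)

/-- A metric space is spherically complete if every nested sequence of closed balls has
non-empty intersection. -/
def SphComplete (α : Type) [MetricSpace α] : Prop :=
  ∀ (c : ℕ → α) (r : ℕ → ℝ), (∀ n, 0 ≤ r n) →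
    (∀ n, closedBall (c (n + 1)) (r (n + 1)) ⊆ closedBall (c n) (r n)) →
    (⋂ n, closedBall (c n) (r n)).Nonempty

/-- The set of non-zero norm values of a normed space (e.g. the value group `|K*|`). -/
def NormValues (E : Type) [NormedAddCommGroup E] : Set ℝ :=
  {t : ℝ | ∃ x : E, x ≠ 0 ∧ ‖x‖ = t}

/-- `K` is densely valued: `|K*|` is a dense subset of `(0,∞)`. -/
def DenselyValued : Prop :=
  Ioi (0 : ℝ) ⊆ closure (NormValues K)

end

/-!
Put `D = j - f|_X`, so `‖D‖ < 1`. If `X` is not dense in `Y`, Riesz's lemma applied to its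
closure gives a direction `z` with `‖x‖ ≤ t ‖x + a z‖` on `X` (this uses the ultrametric
inequality), so `D` extends by `0` along `z` at the cost of a factor `t`; if `X` is dense, `D`
extends by continuity. Since `Y` is finite-dimensional, finitely many steps extend `D` to
`g : Y → G` with `‖g‖ < 1`. Then `T = f + g` is an isometry: `‖g y‖ < ‖y‖ = ‖f y‖`, and in the
ultrametric space `G` this forces `‖f y + g y‖ = ‖f y‖`.
-/

section Extension

variable {K : Type*} [NontriviallyNormedField K]
  {Y G : Type*} [NormedAddCommGroup Y] [NormedSpace K Y] [NormedAddCommGroup G] [NormedSpace K G]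

theorem norm_le_mul_norm_add_smul [IsUltrametricDist Y] {X : Submodule K Y} {z : Y} {t : ℝ}
    (ht : 1 ≤ t) (hz : ∀ y ∈ X, ‖z‖ ≤ t * ‖z - y‖) {x : Y} (hx : x ∈ X) (a : K) :
    ‖x‖ ≤ t * ‖x + a • z‖ := by
  have hsmul : ‖a • z‖ ≤ t * ‖x + a • z‖ := by
    rcases eq_or_ne a 0 with rfl | ha
    · simp only [zero_smul, norm_zero, add_zero]
      positivity
    · have hxz : x + a • z = a • (z - -(a⁻¹ • x)) := by
        rw [sub_neg_eq_add, smul_add, smul_inv_smul₀ ha, add_comm]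
      calc ‖a • z‖ = ‖a‖ * ‖z‖ := norm_smul a z
        _ ≤ ‖a‖ * (t * ‖z - -(a⁻¹ • x)‖) :=
          mul_le_mul_of_nonneg_left (hz _ (X.neg_mem (X.smul_mem _ hx))) (norm_nonneg a)
        _ = t * ‖x + a • z‖ := by rw [hxz, norm_smul]; ring
  calc ‖x‖ = ‖(x + a • z) + -(a • z)‖ := by rw [add_neg_cancel_right]
    _ ≤ max ‖x + a • z‖ ‖a • z‖ := by
      simpa only [norm_neg] using IsUltrametricDist.norm_add_le_max (x + a • z) (-(a • z))
    _ ≤ t * ‖x + a • z‖ := max_le (le_mul_of_one_le_left (norm_nonneg _) ht) hsmul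

theorem exists_extension_sup_span_singleton {X : Submodule K Y} (D : X →L[K] G) {z : Y}
    (hz : z ∉ X) {t : ℝ} (ht : 0 ≤ t) (horth : ∀ x ∈ X, ∀ a : K, ‖x‖ ≤ t * ‖x + a • z‖) :
    ∃ D₁ : ↥(X ⊔ K ∙ z) →L[K] G,
      ‖D₁‖ ≤ t * ‖D‖ ∧ ∀ x : X, D₁ ⟨x, Submodule.mem_sup_left x.2⟩ = D x := by
  -- `D` extended by `0` on the line through `z`
  let E := (LinearPMap.mk X (D : X →ₗ[K] G)).supSpanSingleton z 0 hz
  have hbound : ∀ u : E.domain, ‖E u‖ ≤ t * ‖D‖ * ‖(u : Y)‖ := by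
    rintro ⟨u, hu⟩
    obtain ⟨x, hx, w, hw, rfl⟩ := Submodule.mem_sup.1 hu
    obtain ⟨a, rfl⟩ := Submodule.mem_span_singleton.1 hw
    rw [LinearPMap.supSpanSingleton_apply_mk _ z 0 hz x hx a, smul_zero, add_zero]
    calc ‖D ⟨x, hx⟩‖ ≤ ‖D‖ * ‖x‖ := D.le_opNorm _
      _ ≤ ‖D‖ * (t * ‖x + a • z‖) := mul_le_mul_of_nonneg_left (horth x hx a) (norm_nonneg D)
      _ = t * ‖D‖ * ‖x + a • z‖ := by ring
  exact ⟨E.toFun.mkContinuous _ hbound,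
    LinearMap.mkContinuous_norm_le _ (mul_nonneg ht (norm_nonneg D)) _,
    fun x => LinearPMap.supSpanSingleton_apply_mk_of_mem _ _ hz x.2⟩

theorem exists_extension_of_dense [CompleteSpace G] {X : Submodule K Y}
    (hX : Dense (X : Set Y)) (D : X →L[K] G) :
    ∃ g : Y →L[K] G, ‖g‖ ≤ ‖D‖ ∧ ∀ x : X, g x = D x :=
  ⟨D.extend X.subtypeL,
    by simpa using D.opNorm_extend_le (N := 1) hX.denseRange_val (by simp),
    D.extend_eq hX.denseRange_val isUniformEmbedding_subtype_val.isUniformInducing⟩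

theorem exists_extension_opNorm_le [IsUltrametricDist Y] [FiniteDimensional K Y] [CompleteSpace G]
    (X : Submodule K Y) (D : X →L[K] G) {s : ℝ} (hs : 1 < s) :
    ∃ g : Y →L[K] G, ‖g‖ ≤ s * ‖D‖ ∧ ∀ x : X, g x = D x := by
  induction X using WellFoundedGT.induction generalizing s with
  | ind X ih =>
  by_cases hX : Dense (X : Set Y)
  · obtain ⟨g, hg, hgD⟩ := exists_extension_of_dense hX D
    exact ⟨g, hg.trans (le_mul_of_one_le_left (norm_nonneg D) hs.le), hgD⟩
  -- the extension along `z` and the induction hypothesis each cost a factor `√s`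
  set t := √s with ht_def
  have ht : 1 < t := Real.lt_sqrt_of_sq_lt (by linarith)
  have ht₀ : 0 < t := one_pos.trans ht
  have hXc : ∃ y, y ∉ X.topologicalClosure := by
    by_contra! hall
    exact hX fun y => by simpa [← SetLike.mem_coe] using hall y
  obtain ⟨z, hzX, hz⟩ := riesz_lemma X.isClosed_topologicalClosure hXc (inv_lt_one_of_one_lt₀ ht)
  have hzX' : z ∉ X := fun h => hzX (X.le_topologicalClosure h)
  have horth : ∀ x ∈ X, ∀ a : K, ‖x‖ ≤ t * ‖x + a • z‖ := fun x hx =>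
    norm_le_mul_norm_add_smul ht.le
      (fun y hy => (inv_mul_le_iff₀ ht₀).1 (hz y (X.le_topologicalClosure hy))) hx
  obtain ⟨D₁, hD₁, hD₁D⟩ := exists_extension_sup_span_singleton D hzX' ht₀.le horth
  have hlt : X < X ⊔ K ∙ z :=
    left_lt_sup.2 fun h => hzX' (h (Submodule.mem_span_singleton_self z))
  obtain ⟨g, hg, hgD₁⟩ := ih _ hlt D₁ ht
  refine ⟨g, ?_, fun x => (hgD₁ _).trans (hD₁D x)⟩
  calc ‖g‖ ≤ t * (t * ‖D‖) := hg.trans (mul_le_mul_of_nonneg_left hD₁ ht₀.le)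
    _ = s * ‖D‖ := by rw [← mul_assoc, ← sq, ht_def, Real.sq_sqrt (by linarith)]

theorem exists_extension_opNorm_lt [IsUltrametricDist Y] [FiniteDimensional K Y] [CompleteSpace G]
    (X : Submodule K Y) (D : X →L[K] G) {r : ℝ} (hr : ‖D‖ < r) :
    ∃ g : Y →L[K] G, ‖g‖ < r ∧ ∀ x : X, g x = D x := by
  have hr₀ : 0 < r := (norm_nonneg D).trans_lt hr
  obtain ⟨g, hg, hgD⟩ := exists_extension_opNorm_le X D (s := 2 * r / (r + ‖D‖))
    (by rw [one_lt_div (by positivity)]; linarith)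
  refine ⟨g, hg.trans_lt ?_, hgD⟩
  rw [div_mul_eq_mul_div, div_lt_iff₀ (by positivity)]
  nlinarith

theorem ContinuousLinearMap.norm_add_apply_of_opNorm_lt_one [IsUltrametricDist G]
    {f g : Y →L[K] G} (hf : ∀ y, ‖f y‖ = ‖y‖) (hg : ‖g‖ < 1) (y : Y) :
    ‖(f + g) y‖ = ‖y‖ := by
  rcases eq_or_ne y 0 with rfl | hy
  · simp
  have hgy : ‖g y‖ < ‖f y‖ := by
    rw [hf]
    calc ‖g y‖ ≤ ‖g‖ * ‖y‖ := g.le_opNorm y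
      _ < ‖y‖ := mul_lt_of_lt_one_left (norm_pos_iff.2 hy) hg
  rw [add_apply, IsUltrametricDist.norm_add_eq_max_of_norm_ne_norm hgy.ne', max_eq_left hgy.le, hf]

end Extension

theorem isUD_of_almost_extension_general (K : Type) [NontriviallyNormedField K]
    (G : Type) [NormedAddCommGroup G] [NormedSpace K G] [CompleteSpace G] [IsUltrametricDist G]
    (h : ∀ (Y : Type) [NormedAddCommGroup Y] [NormedSpace K Y] [IsUltrametricDist Y]
      [FiniteDimensional K Y] (X : Submodule K Y) (j : X →L[K] G),
      (∀ x : X, ‖j x‖ = ‖(x : Y)‖) →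
      ∃ f : Y →L[K] G, (∀ y : Y, ‖f y‖ = ‖y‖) ∧ ‖j - f.comp X.subtypeL‖ < 1) :
    ∀ (Y : Type) [NormedAddCommGroup Y] [NormedSpace K Y] [IsUltrametricDist Y]
      [FiniteDimensional K Y] (X : Submodule K Y) (j : X →L[K] G),
      (∀ x : X, ‖j x‖ = ‖(x : Y)‖) →
      ∃ T : Y →L[K] G, (∀ y : Y, ‖T y‖ = ‖y‖) ∧ ∀ x : X, T (x : Y) = j x := by
  intro Y _ _ _ _ X j hj
  obtain ⟨f, hf, hjf⟩ := h Y X j hj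
  obtain ⟨g, hg, hgD⟩ := exists_extension_opNorm_lt X (j - f.comp X.subtypeL) hjf
  refine ⟨f + g, ContinuousLinearMap.norm_add_apply_of_opNorm_lt_one hf hg, fun x => ?_⟩
  simp [hgD x]

/-- If for every finite-dimensional non-archimedean normed space `Y`, every subspace
`X ⊆ Y` and every isometric embedding `j : X → G` there is an isometry `f : Y → G` with
`‖j - f|_X‖ < 1`, then `G` is of universal disposition for `U_FNA`: every such `j`
extends to an isometry `T : Y → G`. -/
theorem isUD_of_almost_extension (K : Type) [NontriviallyNormedField K] [IsUltrametricDist K]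
    (G : Type) [NormedAddCommGroup G] [NormedSpace K G] [CompleteSpace G] [IsUltrametricDist G]
    (h : ∀ (Y : Type) [NormedAddCommGroup Y] [NormedSpace K Y] [IsUltrametricDist Y]
      [FiniteDimensional K Y] (X : Submodule K Y) (j : X →L[K] G),
      (∀ x : X, ‖j x‖ = ‖(x : Y)‖) →
      ∃ f : Y →L[K] G, (∀ y : Y, ‖f y‖ = ‖y‖) ∧ ‖j - f.comp X.subtypeL‖ < 1) :
    ∀ (Y : Type) [NormedAddCommGroup Y] [NormedSpace K Y] [IsUltrametricDist Y]
      [FiniteDimensional K Y] (X : Submodule K Y) (j : X →L[K] G),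
      (∀ x : X, ‖j x‖ = ‖(x : Y)‖) →
      ∃ T : Y →L[K] G, (∀ y : Y, ‖T y‖ = ‖y‖) ∧ ∀ x : X, T (x : Y) = j x :=
  isUD_of_almost_extension_general K G h
end

section
/- Let 0 < t ≤ 1 and let {x₁,…,x_n} be a t-orthogonal set in a non-archimedean normed space E over K. If z₁,…,z_n ∈ E satisfy ‖x_i − z_i‖ < t·‖x_i‖ for each i ∈ {1,…,n}, then ‖z_i‖ = ‖x_i‖ for each i and {z₁,…,z_n} is also t-orthogonal; in fact ‖λ₁z₁+⋯+λ_n z_n‖ = ‖λ₁x₁+⋯+λ_n x_n‖ for all λ₁,…,λ_n ∈ K. -/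
open Metric Set

variable (K : Type) [NontriviallyNormedField K] in
/-- A family `x : ι → E` is `t`-orthogonal if
`‖∑_{i∈J} λ_i x_i‖ ≥ t · max_{i∈J} ‖λ_i x_i‖` for every finite `J` and all scalars. -/
def TOrth {E : Type} [NormedAddCommGroup E] [NormedSpace K E] (t : ℝ) {ι : Type}
    (x : ι → E) : Prop :=
  ∀ (J : Finset ι) (lam : ι → K), ∀ i ∈ J, t * ‖lam i • x i‖ ≤ ‖∑ j ∈ J, lam j • x j‖

/-
Write `s = ∑ λ_j x_j`. Each error term `λ_j (x_j - z_j)` with `λ_j ≠ 0` has norm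
`< t ‖λ_j x_j‖ ≤ ‖s‖` by `t`-orthogonality, so by the ultrametric inequality the total error
`s - ∑ λ_j z_j` is strictly shorter than `s`, and therefore `‖∑ λ_j z_j‖ = ‖s‖`. Norm equality and
`t`-orthogonality of the `z_i` are special cases.
-/

section Ultrametric

variable {E : Type*} [SeminormedAddCommGroup E] [IsUltrametricDist E]

theorem IsUltrametricDist.norm_sub_eq_left_of_norm_lt {a b : E} (h : ‖b‖ < ‖a‖) :
    ‖a - b‖ = ‖a‖ := by
  rw [sub_eq_add_neg, IsUltrametricDist.norm_add_eq_max_of_norm_ne_norm (by simpa using h.ne'),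
    norm_neg, max_eq_left h.le]

theorem IsUltrametricDist.norm_sum_lt_of_forall_lt {ι : Type*} {s : Finset ι} (hs : s.Nonempty)
    {f : ι → E} {C : ℝ} (h : ∀ i ∈ s, ‖f i‖ < C) : ‖∑ i ∈ s, f i‖ < C :=
  let ⟨i, hi, hle⟩ := IsUltrametricDist.exists_norm_finsetSum_le_of_nonempty hs f
  hle.trans_lt (h i hi)

end Ultrametric

section Perturbation

variable {K : Type} [NontriviallyNormedField K] {E : Type} [NormedAddCommGroup E]
  [NormedSpace K E] {t : ℝ} {ι : Type} {x z : ι → E}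

theorem TOrth.norm_smul_sub_lt_norm_sum (hx : TOrth K t x)
    (hclose : ∀ i, ‖x i - z i‖ < t * ‖x i‖) {J : Finset ι} {lam : ι → K} {j : ι} (hj : j ∈ J)
    (hlam : lam j ≠ 0) : ‖lam j • (x j - z j)‖ < ‖∑ i ∈ J, lam i • x i‖ :=
  calc ‖lam j • (x j - z j)‖ = ‖lam j‖ * ‖x j - z j‖ := norm_smul _ _
    _ < ‖lam j‖ * (t * ‖x j‖) := mul_lt_mul_of_pos_left (hclose j) (norm_pos_iff.2 hlam)
    _ = t * ‖lam j • x j‖ := by rw [norm_smul]; ring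
    _ ≤ ‖∑ i ∈ J, lam i • x i‖ := hx J lam j hj

variable [IsUltrametricDist E]

theorem TOrth.norm_sum_smul_eq_of_close (hx : TOrth K t x)
    (hclose : ∀ i, ‖x i - z i‖ < t * ‖x i‖) (J : Finset ι) (lam : ι → K) :
    ‖∑ i ∈ J, lam i • z i‖ = ‖∑ i ∈ J, lam i • x i‖ := by
  by_cases hzero : ∀ j ∈ J, lam j = 0
  · have hvanish (v : ι → E) : ∑ i ∈ J, lam i • v i = 0 :=
      Finset.sum_eq_zero fun j hj => by rw [hzero j hj, zero_smul]
    rw [hvanish z, hvanish x]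
  push Not at hzero
  obtain ⟨j₀, hj₀, hlam₀⟩ := hzero
  set s := ∑ i ∈ J, lam i • x i
  have hs : 0 < ‖s‖ :=
    (norm_nonneg _).trans_lt (hx.norm_smul_sub_lt_norm_sum hclose hj₀ hlam₀)
  have herror : ‖∑ i ∈ J, lam i • (x i - z i)‖ < ‖s‖ := by
    refine IsUltrametricDist.norm_sum_lt_of_forall_lt ⟨j₀, hj₀⟩ fun j hj => ?_
    rcases eq_or_ne (lam j) 0 with hlam | hlam
    · simpa [hlam] using hs
    · exact hx.norm_smul_sub_lt_norm_sum hclose hj hlam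
  have hdiff : ∑ i ∈ J, lam i • z i = s - ∑ i ∈ J, lam i • (x i - z i) := by
    simp only [s, smul_sub, Finset.sum_sub_distrib, sub_sub_cancel]
  rw [hdiff, IsUltrametricDist.norm_sub_eq_left_of_norm_lt herror]

theorem TOrth.norm_eq_of_close (hx : TOrth K t x) (hclose : ∀ i, ‖x i - z i‖ < t * ‖x i‖)
    (i : ι) : ‖z i‖ = ‖x i‖ := by
  simpa using hx.norm_sum_smul_eq_of_close hclose {i} 1

theorem TOrth.of_close (hx : TOrth K t x) (hclose : ∀ i, ‖x i - z i‖ < t * ‖x i‖) :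
    TOrth K t z := by
  intro J lam i hi
  rw [hx.norm_sum_smul_eq_of_close hclose, norm_smul, hx.norm_eq_of_close hclose, ← norm_smul]
  exact hx J lam i hi

end Perturbation

theorem tOrth_of_close_general (K : Type) [NontriviallyNormedField K]
    (E : Type) [NormedAddCommGroup E] [NormedSpace K E] [IsUltrametricDist E]
    (t : ℝ) (n : ℕ) (x z : Fin n → E)
    (hx : TOrth K t x) (hclose : ∀ i, ‖x i - z i‖ < t * ‖x i‖) :
    (∀ i, ‖z i‖ = ‖x i‖) ∧ TOrth K t z ∧
      ∀ lam : Fin n → K, ‖∑ i, lam i • z i‖ = ‖∑ i, lam i • x i‖ :=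
  ⟨hx.norm_eq_of_close hclose, hx.of_close hclose, hx.norm_sum_smul_eq_of_close hclose _⟩

/-- Perturbing a `t`-orthogonal set `{x_1,…,x_n}` by vectors `z_i` with
`‖x_i − z_i‖ < t‖x_i‖` preserves norms, `t`-orthogonality, and even the norms of all
linear combinations. -/
theorem tOrth_of_close (K : Type) [NontriviallyNormedField K] [IsUltrametricDist K]
    (E : Type) [NormedAddCommGroup E] [NormedSpace K E] [IsUltrametricDist E]
    (t : ℝ) (ht0 : 0 < t) (ht1 : t ≤ 1) (n : ℕ) (x z : Fin n → E)
    (hx : TOrth K t x) (hclose : ∀ i, ‖x i - z i‖ < t * ‖x i‖) :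
    (∀ i, ‖z i‖ = ‖x i‖) ∧ TOrth K t z ∧
      ∀ lam : Fin n → K, ‖∑ i, lam i • z i‖ = ‖∑ i, lam i • x i‖ :=
  tOrth_of_close_general K E t n x z hx hclose
end

section
/- Let E and F be non-archimedean normed spaces over K, let D be a linear subspace of E such that E is an immediate extension of D, suppose F is spherically complete, and let T : D → F be a linear isometry. Then T extends to a linear isometry T' : E → F (T'(x) = T(x) for all x ∈ D and ‖T'(x)‖ = ‖x‖ for all x ∈ E). -/
open Metric Set

variable (K : Type) [NontriviallyNormedField K] in
/-- `E` is an immediate extension of its subspace `D`: no non-zero element of `E` is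
orthogonal to `D`, i.e. `dist(x, D) < ‖x − d‖` for all `x ∈ E \ D` and `d ∈ D`. -/
def IsImmediateExt {E : Type} [NormedAddCommGroup E] [NormedSpace K E]
    (D : Submodule K E) : Prop :=
  ∀ x : E, x ∉ D → ∀ d ∈ D, infDist x (D : Set E) < ‖x - d‖

private lemma ultra_sub_le {G : Type} [NormedAddCommGroup G] [IsUltrametricDist G] (a b : G) :
    ‖a - b‖ ≤ max ‖a‖ ‖b‖ := by
  rw [sub_eq_add_neg]
  exact (IsUltrametricDist.norm_add_le_max a (-b)).trans (by simp)

private lemma ultra_tri {G : Type} [NormedAddCommGroup G] [IsUltrametricDist G] (a b c : G) :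
    ‖a - c‖ ≤ max ‖a - b‖ ‖b - c‖ := by
  have : a - c = (a - b) + (b - c) := by abel
  rw [this]
  exact IsUltrametricDist.norm_add_le_max _ _

private lemma exists_good_point {K : Type} [NontriviallyNormedField K]
    {E : Type} [NormedAddCommGroup E] [NormedSpace K E] [IsUltrametricDist E]
    {F : Type} [NormedAddCommGroup F] [NormedSpace K F] [IsUltrametricDist F]
    (hF : SphComplete F) (D' : Submodule K E) (S : D' →ₗ[K] F)
    (hS : ∀ d : D', ‖S d‖ = ‖(d : E)‖) (x : E)
    (himm : ∀ d : D', infDist x (D' : Set E) < ‖x - d‖) :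
    ∃ f : F, ∀ d : D', ‖f - S d‖ = ‖x - (d : E)‖ := by
  set r := infDist x (D' : Set E) with hr
  have hne : (D' : Set E).Nonempty := ⟨0, D'.zero_mem⟩
  have hch : ∀ n : ℕ, ∃ d : D', ‖x - (d : E)‖ < r + 1 / (n + 1) := by
    intro n
    have hpos : (0:ℝ) < 1 / (n + 1) := by positivity
    have : infDist x (D' : Set E) < r + 1 / (n + 1) := by linarith
    obtain ⟨y, hy, hdy⟩ := (infDist_lt_iff hne).1 this
    exact ⟨⟨y, hy⟩, by rwa [← dist_eq_norm]⟩
  choose d hd using hch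
  set rad : ℕ → ℝ := fun n => r + 1 / (n + 1) with hrad
  have hradpos : ∀ n, (0:ℝ) ≤ rad n := by
    intro n
    have : (0:ℝ) ≤ r := infDist_nonneg
    have : (0:ℝ) < 1 / ((n:ℝ) + 1) := by positivity
    simp only [hrad]
    linarith [infDist_nonneg (x := x) (s := (D' : Set E))]
  have hrad_anti : ∀ n, rad (n + 1) ≤ rad n := by
    intro n
    have h1 : (1:ℝ) / ((n:ℝ) + 1 + 1) ≤ 1 / ((n:ℝ) + 1) := by
      apply one_div_le_one_div_of_le
      · positivity
      · linarith
    simp only [hrad, Nat.cast_add, Nat.cast_one]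
    linarith
  have hdd : ∀ m n : ℕ, dist (S (d m)) (S (d n)) ≤ max (rad m) (rad n) := by
    intro m n
    rw [dist_eq_norm, ← map_sub, hS]
    have hco : ((d m - d n : D') : E) = (x - (d n : E)) - (x - (d m : E)) := by
      push_cast; abel
    rw [hco]
    exact (ultra_sub_le _ _).trans (max_le
      (le_max_of_le_right (hd n).le) (le_max_of_le_left (hd m).le))
  have hnest : ∀ n, closedBall (S (d (n+1))) (rad (n+1)) ⊆ closedBall (S (d n)) (rad n) := by
    intro n z hz
    rw [mem_closedBall] at hz ⊢
    refine (IsUltrametricDist.dist_triangle_max z (S (d (n+1))) (S (d n))).trans (max_le ?_ ?_)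
    · exact hz.trans (hrad_anti n)
    · exact (hdd (n+1) n).trans (max_le (hrad_anti n) le_rfl)
  obtain ⟨f, hf⟩ := hF (fun n => S (d n)) rad hradpos hnest
  simp only [mem_iInter, mem_closedBall] at hf
  have hub : ∀ e : D', ‖f - S e‖ ≤ ‖x - (e : E)‖ := by
    intro e
    have hre : r < ‖x - (e : E)‖ := himm e
    obtain ⟨n, hn⟩ := exists_nat_one_div_lt (show (0:ℝ) < ‖x - (e : E)‖ - r by linarith)
    have h1 : ‖f - S (d n)‖ ≤ rad n := by rw [← dist_eq_norm]; exact hf n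
    have h2 : ‖S (d n) - S e‖ ≤ max (rad n) ‖x - (e : E)‖ := by
      rw [← map_sub, hS]
      have hco : ((d n - e : D') : E) = (x - (e : E)) - (x - (d n : E)) := by
        push_cast; abel
      rw [hco]
      exact (ultra_sub_le _ _).trans (max_le (le_max_right _ _)
        (le_max_of_le_left (hd n).le))
    have hradlt : rad n < ‖x - (e : E)‖ := by
      simp only [hrad]; linarith [hn]
    calc ‖f - S e‖ ≤ max ‖f - S (d n)‖ ‖S (d n) - S e‖ := ultra_tri _ _ _
      _ ≤ max (rad n) (max (rad n) ‖x - (e : E)‖) := max_le_max h1 h2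
      _ ≤ ‖x - (e : E)‖ := by
          apply max_le hradlt.le (max_le hradlt.le le_rfl)
  refine ⟨f, fun e => le_antisymm (hub e) ?_⟩
  by_contra hcon
  push_neg at hcon
  obtain ⟨y, hy, hdy⟩ := (infDist_lt_iff hne).1 (himm e)
  set d' : D' := ⟨y, hy⟩ with hd'
  rw [dist_eq_norm] at hdy
  have h1 : ‖x - (e : E)‖ ≤ max ‖x - (d' : E)‖ ‖(d' : E) - (e : E)‖ := ultra_tri _ _ _
  have h2 : ‖(d' : E) - (e : E)‖ ≤ max ‖x - (d' : E)‖ ‖f - S e‖ := by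
    have hco : ((d' : E) - (e : E)) = ((d' - e : D') : E) := by push_cast; abel
    rw [hco, ← hS, map_sub]
    refine (ultra_tri (S d') f (S e)).trans (max_le ?_ (le_max_right _ _))
    rw [← norm_neg, neg_sub]
    exact le_max_of_le_left (hub d')
  have : ‖x - (e : E)‖ < ‖x - (e : E)‖ := by
    refine h1.trans_lt ?_
    apply max_lt hdy
    exact h2.trans_lt (max_lt hdy hcon)
  exact lt_irrefl _ this

/-- An isometry defined on a subspace `D` of which `E` is an immediate extension, with
values in a spherically complete space `F`, extends to an isometry on all of `E`. -/
theorem isometry_extends_of_immediate_sphComplete (K : Type) [NontriviallyNormedField K]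
    [IsUltrametricDist K]
    (E : Type) [NormedAddCommGroup E] [NormedSpace K E] [IsUltrametricDist E]
    (F : Type) [NormedAddCommGroup F] [NormedSpace K F] [IsUltrametricDist F]
    (D : Submodule K E) (hD : IsImmediateExt K D) (hF : SphComplete F)
    (T : D →ₗ[K] F) (hT : ∀ d : D, ‖T d‖ = ‖(d : E)‖) :
    ∃ T' : E →ₗ[K] F, (∀ d : D, T' (d : E) = T d) ∧ ∀ x : E, ‖T' x‖ = ‖x‖ := by
  classical
  set p0 : E →ₗ.[K] F := ⟨D, T⟩ with hp0
  set Sset : Set (E →ₗ.[K] F) :=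
    {p | p0 ≤ p ∧ ∀ z : p.domain, ‖p z‖ = ‖(z : E)‖} with hSset
  have hp0S : p0 ∈ Sset := ⟨le_refl _, hT⟩
  obtain ⟨m, hm0, hmax⟩ := zorn_le_nonempty₀ Sset (fun c hcS hc y hy => by
    have hdir : DirectedOn (· ≤ ·) c := hc.directedOn
    refine ⟨LinearPMap.sSup c hdir, ⟨?_, ?_⟩, fun z hz => LinearPMap.le_sSup hdir hz⟩
    · exact (hcS hy).1.trans (LinearPMap.le_sSup hdir hy)
    · intro z
      have hdomdir : DirectedOn (· ≤ ·) (LinearPMap.domain '' c) :=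
        directedOn_image.2 (hdir.mono @(LinearPMap.domain_mono.monotone))
      have hz2 : (z : E) ∈ sSup (LinearPMap.domain '' c) := z.2
      obtain ⟨_, ⟨l, hl, rfl⟩, hzl⟩ :=
        (Submodule.mem_sSup_of_directed ⟨_, Set.mem_image_of_mem _ hy⟩ hdomdir).1 hz2
      have hz' : (LinearPMap.sSup c hdir) z = l ⟨(z : E), hzl⟩ :=
        LinearPMap.sSup_apply hdir hl ⟨(z : E), hzl⟩
      rw [hz', (hcS hl).2 ⟨(z : E), hzl⟩]) p0 hp0S
  obtain ⟨⟨hm1, hm2⟩, hmax2⟩ := hmax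
  have htop : m.domain = ⊤ := by
    by_contra hne
    obtain ⟨x, hx⟩ : ∃ x : E, x ∉ m.domain := by
      by_contra h
      push_neg at h
      exact hne (Submodule.eq_top_iff'.2 h)
    have hDm : D ≤ m.domain := hm1.1
    have hmne : ((m.domain : Submodule K E) : Set E).Nonempty := ⟨0, m.domain.zero_mem⟩
    have himm : ∀ d : m.domain, infDist x ((m.domain : Submodule K E) : Set E) < ‖x - d‖ := by
      intro d
      have hyD : x - (d : E) ∉ D := by
        intro h
        apply hx
        have hxe : x = (x - (d : E)) + (d : E) := by abel
        rw [hxe]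
        exact m.domain.add_mem (hDm h) d.2
      have h1 : infDist (x - (d : E)) (D : Set E) < ‖x - (d : E) - 0‖ :=
        hD _ hyD 0 D.zero_mem
      rw [sub_zero] at h1
      have h2 : infDist (x - (d : E)) ((m.domain : Submodule K E) : Set E) ≤
          infDist (x - (d : E)) (D : Set E) :=
        infDist_le_infDist_of_subset hDm ⟨0, D.zero_mem⟩
      have h3 : infDist x ((m.domain : Submodule K E) : Set E) ≤
          infDist (x - (d : E)) ((m.domain : Submodule K E) : Set E) := by
        by_contra h
        push_neg at h
        obtain ⟨e, he, hlt⟩ := (infDist_lt_iff hmne).1 h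
        have hmem : infDist x ((m.domain : Submodule K E) : Set E) ≤ dist x (e + (d : E)) :=
          infDist_le_dist_of_mem (m.domain.add_mem he d.2)
        have heq : dist (x - (d : E)) e = dist x (e + (d : E)) := by
          rw [dist_eq_norm, dist_eq_norm]
          congr 1
          abel
        rw [heq] at hlt
        linarith
      linarith
    obtain ⟨f, hfgood⟩ := exists_good_point hF m.domain m.toFun hm2 x himm
    have hmm' : m ≤ m.supSpanSingleton x f hx := LinearPMap.left_le_sup _ _ _
    have hm'iso : ∀ z : (m.supSpanSingleton x f hx).domain,
        ‖(m.supSpanSingleton x f hx) z‖ = ‖(z : E)‖ := by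
      intro z
      have hz : (z : E) ∈ m.domain ⊔ (K ∙ x) := z.2
      obtain ⟨a, ha, b, hb, hab⟩ := Submodule.mem_sup.1 hz
      obtain ⟨c, rfl⟩ := Submodule.mem_span_singleton.1 hb
      have hzeq : z = (⟨a + c • x, Submodule.mem_sup.2
          ⟨a, ha, c • x, Submodule.mem_span_singleton.2 ⟨c, rfl⟩, rfl⟩⟩ :
          (m.supSpanSingleton x f hx).domain) := Subtype.ext hab.symm
      rw [hzeq, LinearPMap.supSpanSingleton_apply_mk]
      show ‖m ⟨a, ha⟩ + c • f‖ = ‖a + c • x‖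
      rcases eq_or_ne c 0 with rfl | hc
      · simpa using hm2 ⟨a, ha⟩
      · set e : m.domain := (-(c⁻¹)) • (⟨a, ha⟩ : m.domain) with he
        have h1 : ‖f - m.toFun e‖ = ‖x - (e : E)‖ := hfgood e
        have h2 : m ⟨a, ha⟩ + c • f = c • (f - m.toFun e) := by
          have : m.toFun e = (-(c⁻¹)) • m.toFun (⟨a, ha⟩ : m.domain) := map_smul _ _ _
          rw [smul_sub, this, smul_smul, mul_neg, mul_inv_cancel₀ hc, neg_smul, one_smul,
            sub_neg_eq_add]
          show m ⟨a, ha⟩ + c • f = c • f + m ⟨a, ha⟩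
          abel
        have h3 : a + c • x = c • (x - (e : E)) := by
          have hce : (e : E) = (-(c⁻¹)) • a := rfl
          rw [smul_sub, hce, smul_smul, mul_neg, mul_inv_cancel₀ hc, neg_smul, one_smul,
            sub_neg_eq_add]
          abel
        rw [h2, h3, norm_smul, norm_smul, h1]
    have hm'S : m.supSpanSingleton x f hx ∈ Sset := ⟨hm1.trans hmm', hm'iso⟩
    have hle := hmax2 hm'S hmm'
    apply hx
    apply hle.1
    rw [LinearPMap.domain_supSpanSingleton]
    exact Submodule.mem_sup_right (Submodule.mem_span_singleton_self x)
  let inc : E →ₗ[K] m.domain :=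
    LinearMap.codRestrict m.domain LinearMap.id (fun z => by rw [htop]; trivial)
  refine ⟨m.toFun.comp inc, fun d => ?_, fun z => hm2 (inc z)⟩
  exact (hm1.2 (x := d) (y := inc (d : E)) rfl).symm
end

section
/- Let Y be a finite-dimensional non-archimedean normed space over K and X a linear subspace of Y. Let {u₁,…,u_{m_Y}} be a maximal orthogonal set in Y such that {u₁,…,u_{m_X}} is a maximal orthogonal set in X for some m_X ≤ m_Y, and let F_Y := span(u_{m_X+1},…,u_{m_Y}). Then F_Y ⊥ X, i.e. ‖x + y‖ = max{‖x‖, ‖y‖} for all x ∈ X and y ∈ F_Y. -/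
open Metric Set

variable (K : Type) [NontriviallyNormedField K] in
/-- A set `S` in a non-archimedean normed space is orthogonal if
`‖∑_{v∈J} λ_v v‖ = max_{v∈J} ‖λ_v v‖` for every non-empty finite `J ⊆ S` and all scalars. -/
def OrthSet {E : Type} [NormedAddCommGroup E] [NormedSpace K E] (S : Set E) : Prop :=
  ∀ (J : Finset E) (hJ : J.Nonempty), ↑J ⊆ S → ∀ lam : E → K,
    ‖∑ v ∈ J, lam v • v‖ = J.sup' hJ fun v => ‖lam v • v‖

variable (K : Type) [NontriviallyNormedField K] in
/-- `S` is a maximal orthogonal set in `Z`. -/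
def IsMaxOrthIn {E : Type} [NormedAddCommGroup E] [NormedSpace K E] (S Z : Set E) : Prop :=
  S ⊆ Z ∧ OrthSet K S ∧ ∀ S' : Set E, S' ⊆ Z → OrthSet K S' → S ⊆ S' → S' = S

/-- If `s` lies in the span of `A` and `t` in the span of `B`, with `A` and `B` disjoint
subsets of an orthogonal set `S`, then `‖t‖ ≤ ‖s + t‖`. -/
lemma aux_orth_pair {K : Type} [NontriviallyNormedField K] {E : Type} [NormedAddCommGroup E]
    [NormedSpace K E] {S A B : Set E} (hS : OrthSet K S) (hA : A ⊆ S) (hB : B ⊆ S)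
    (hAB : Disjoint A B) :
    ∀ s ∈ Submodule.span K A, ∀ t ∈ Submodule.span K B, ‖t‖ ≤ ‖s + t‖ := by
  classical
  intro s hs t ht
  rcases eq_or_ne t 0 with rfl | ht0
  · simp
  obtain ⟨c, hcs, hc⟩ := Submodule.mem_span_set.mp hs
  obtain ⟨d, hds, hd⟩ := Submodule.mem_span_set.mp ht
  have hdsupp : d.support.Nonempty := by
    rw [Finsupp.support_nonempty_iff]
    rintro rfl
    apply ht0
    rw [← hd]
    simp
  have hJne : (c.support ∪ d.support).Nonempty := hdsupp.mono Finset.subset_union_right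
  have hJS : ↑(c.support ∪ d.support) ⊆ S := by
    intro v hv
    rcases Finset.mem_union.mp hv with h | h
    · exact hA (hcs h)
    · exact hB (hds h)
  have hczero : ∀ v ∈ d.support, c v = 0 := by
    intro v hv
    by_contra h
    exact Set.disjoint_left.mp hAB (hcs (Finsupp.mem_support_iff.mpr h)) (hds hv)
  have h1 : ∑ v ∈ c.support ∪ d.support, c v • v = s := by
    rw [← hc]
    simp only [Finsupp.sum]
    exact (Finset.sum_subset Finset.subset_union_left (fun v _ hv => by
      rw [Finsupp.notMem_support_iff.mp hv, zero_smul])).symm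
  have h2 : ∑ v ∈ c.support ∪ d.support, d v • v = t := by
    rw [← hd]
    simp only [Finsupp.sum]
    exact (Finset.sum_subset Finset.subset_union_right (fun v _ hv => by
      rw [Finsupp.notMem_support_iff.mp hv, zero_smul])).symm
  have hsum : ∑ v ∈ c.support ∪ d.support, (c v + d v) • v = s + t := by
    calc ∑ v ∈ c.support ∪ d.support, (c v + d v) • v
        = ∑ v ∈ c.support ∪ d.support, (c v • v + d v • v) := by simp_rw [add_smul]
      _ = (∑ v ∈ c.support ∪ d.support, c v • v)
            + ∑ v ∈ c.support ∪ d.support, d v • v := Finset.sum_add_distrib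
      _ = s + t := by rw [h1, h2]
  have key := hS _ hJne hJS (fun v => c v + d v)
  rw [hsum] at key
  have htn : ‖t‖ = d.support.sup' hdsupp fun v => ‖d v • v‖ := by
    rw [← hd]
    simp only [Finsupp.sum]
    exact hS d.support hdsupp (hds.trans hB) (fun v => d v)
  rw [htn, key]
  apply Finset.sup'_le
  intro v hv
  have hv' : ‖d v • v‖ = ‖(c v + d v) • v‖ := by rw [hczero v hv, zero_add]
  rw [hv']
  exact Finset.le_sup' (fun v => ‖(c v + d v) • v‖) (Finset.mem_union_right _ hv)

/-- If `x` is orthogonal to the span of an orthogonal set `S`, then `insert x S` is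
orthogonal. -/
lemma aux_orth_insert {K : Type} [NontriviallyNormedField K] {E : Type} [NormedAddCommGroup E]
    [NormedSpace K E] [IsUltrametricDist E] {S : Set E} (hS : OrthSet K S) {x : E}
    (hx : ∀ s ∈ Submodule.span K S, ‖x‖ ≤ ‖x + s‖) :
    OrthSet K (insert x S) := by
  classical
  intro J hJne hJsub lam
  by_cases hxJ : x ∈ J
  · have hJ'sub : ↑(J.erase x) ⊆ S := by
      intro v hv
      rcases Finset.mem_erase.mp hv with ⟨hne, hvJ⟩
      rcases hJsub hvJ with h | h
      · exact absurd h hne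
      · exact h
    rcases (J.erase x).eq_empty_or_nonempty with hE | hne
    · have hJx : J = {x} := by
        apply Finset.eq_singleton_iff_unique_mem.mpr
        refine ⟨hxJ, fun v hv => ?_⟩
        by_contra hvx
        have : v ∈ J.erase x := Finset.mem_erase.mpr ⟨hvx, hv⟩
        rw [hE] at this
        exact absurd this (Finset.notMem_empty v)
      subst hJx
      simp
    · have hsplit : ∑ v ∈ J, lam v • v = lam x • x + ∑ v ∈ J.erase x, lam v • v :=
        (Finset.add_sum_erase _ _ hxJ).symm
      have hs_mem : (∑ v ∈ J.erase x, lam v • v) ∈ Submodule.span K S :=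
        Submodule.sum_mem _ fun v hv =>
          Submodule.smul_mem _ _ (Submodule.subset_span (hJ'sub hv))
      have hs_norm : ‖∑ v ∈ J.erase x, lam v • v‖
          = (J.erase x).sup' hne fun v => ‖lam v • v‖ := hS _ hne hJ'sub lam
      have key : ‖lam x • x + ∑ v ∈ J.erase x, lam v • v‖
          = max ‖lam x • x‖ ‖∑ v ∈ J.erase x, lam v • v‖ := by
        rcases eq_or_ne (lam x) 0 with h0 | h0
        · rw [h0, zero_smul, zero_add, norm_zero, max_eq_right (norm_nonneg _)]
        · set s := ∑ v ∈ J.erase x, lam v • v with hs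
          have hge : ‖lam x • x‖ ≤ ‖lam x • x + s‖ := by
            have hmem : (lam x)⁻¹ • s ∈ Submodule.span K S := Submodule.smul_mem _ _ hs_mem
            have h1 := hx _ hmem
            calc ‖lam x • x‖ = ‖lam x‖ * ‖x‖ := norm_smul _ _
              _ ≤ ‖lam x‖ * ‖x + (lam x)⁻¹ • s‖ :=
                  mul_le_mul_of_nonneg_left h1 (norm_nonneg _)
              _ = ‖lam x • (x + (lam x)⁻¹ • s)‖ := (norm_smul _ _).symm
              _ = ‖lam x • x + s‖ := by
                  rw [smul_add, smul_smul, mul_inv_cancel₀ h0, one_smul]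
          refine le_antisymm (IsUltrametricDist.norm_add_le_max _ _) (max_le hge ?_)
          have hsub : s = (lam x • x + s) + (-(lam x • x)) := by abel
          calc ‖s‖ = ‖(lam x • x + s) + (-(lam x • x))‖ := by rw [← hsub]
            _ ≤ max ‖lam x • x + s‖ ‖-(lam x • x)‖ := IsUltrametricDist.norm_add_le_max _ _
            _ ≤ ‖lam x • x + s‖ := by rw [norm_neg]; exact max_le le_rfl hge
      have hsup : J.sup' hJne (fun v => ‖lam v • v‖)
          = max ‖lam x • x‖ ((J.erase x).sup' hne fun v => ‖lam v • v‖) := by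
        apply le_antisymm
        · apply Finset.sup'_le
          intro v hv
          rcases eq_or_ne v x with rfl | hvx
          · exact le_max_left _ _
          · exact le_trans (Finset.le_sup' (fun v => ‖lam v • v‖) (Finset.mem_erase.mpr ⟨hvx, hv⟩))
              (le_max_right _ _)
        · apply max_le
          · exact Finset.le_sup' (fun v => ‖lam v • v‖) hxJ
          · exact Finset.sup'_le _ _ fun v hv =>
              Finset.le_sup' (fun v => ‖lam v • v‖) (Finset.mem_of_mem_erase hv)
      rw [hsplit, key, hsup, hs_norm]
  · have hJS : ↑J ⊆ S := by
      intro v hv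
      rcases hJsub hv with h | h
      · exact absurd (h ▸ hv) hxJ
      · exact h
    exact hS J hJne hJS lam

/-- If `{u_1,…,u_{m_Y}}` is a maximal orthogonal set in a finite-dimensional `Y` whose
initial part `{u_1,…,u_{m_X}}` is a maximal orthogonal set in a subspace `X`, then
`span(u_{m_X+1},…,u_{m_Y})` is orthogonal to `X`. -/
theorem tail_span_orthogonal (K : Type) [NontriviallyNormedField K] [IsUltrametricDist K]
    (Y : Type) [NormedAddCommGroup Y] [NormedSpace K Y] [IsUltrametricDist Y]
    [FiniteDimensional K Y] (X : Submodule K Y) (mX mY : ℕ) (hm : mX ≤ mY)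
    (u : Fin mY → Y) (hu : Function.Injective u)
    (hY : IsMaxOrthIn K (Set.range u) Set.univ)
    (hX : IsMaxOrthIn K (u '' {i : Fin mY | (i : ℕ) < mX}) (X : Set Y)) :
    ∀ x ∈ X, ∀ y ∈ Submodule.span K (u '' {i : Fin mY | mX ≤ (i : ℕ)}),
      ‖x + y‖ = max ‖x‖ ‖y‖ := by
  intro x hx y hy
  by_contra hne
  have hle : ‖x + y‖ ≤ max ‖x‖ ‖y‖ := IsUltrametricDist.norm_add_le_max x y
  have hlt : ‖x + y‖ < max ‖x‖ ‖y‖ := lt_of_le_of_ne hle hne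
  have hxy : ‖x‖ = ‖y‖ := IsUltrametricDist.norm_eq_of_add_norm_lt_max hlt
  rw [← hxy, max_self] at hlt
  have hr : 0 < ‖x‖ := lt_of_le_of_lt (norm_nonneg _) hlt
  set H : Set Y := u '' {i : Fin mY | (i : ℕ) < mX} with hH
  set T : Set Y := u '' {i : Fin mY | mX ≤ (i : ℕ)} with hT
  have hstar : ∃ s ∈ Submodule.span K H, ‖x + s‖ < ‖x‖ := by
    by_contra hc
    push_neg at hc
    have horth : OrthSet K (insert x H) := aux_orth_insert hX.2.1 hc
    have hsub : insert x H ⊆ (X : Set Y) := Set.insert_subset hx hX.1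
    have heq := hX.2.2 (insert x H) hsub horth (Set.subset_insert x H)
    have hxH : x ∈ H := heq ▸ Set.mem_insert x H
    have h0 := hc (-x) (Submodule.neg_mem _ (Submodule.subset_span hxH))
    rw [add_neg_cancel, norm_zero] at h0
    exact absurd h0 (not_le.mpr hr)
  obtain ⟨s, hsmem, hslt⟩ := hstar
  have hdisj : Disjoint H T := by
    rw [Set.disjoint_left]
    rintro a ⟨i, hi, rfl⟩ ⟨j, hj, hji⟩
    have hij : j = i := hu hji
    simp only [Set.mem_setOf_eq] at hi hj
    omega
  have hsm : -s ∈ Submodule.span K H := Submodule.neg_mem _ hsmem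
  have hge : ‖y‖ ≤ ‖-s + y‖ :=
    aux_orth_pair hY.2.1 (Set.image_subset_range u _) (Set.image_subset_range u _)
      hdisj (-s) hsm y hy
  have hdecomp : -s + y = (x + y) + (-(x + s)) := by abel
  have hfin : ‖-s + y‖ < ‖x‖ := by
    calc ‖-s + y‖ = ‖(x + y) + (-(x + s))‖ := by rw [← hdecomp]
      _ ≤ max ‖x + y‖ ‖-(x + s)‖ := IsUltrametricDist.norm_add_le_max _ _
      _ = max ‖x + y‖ ‖x + s‖ := by rw [norm_neg]
      _ < ‖x‖ := max_lt hlt hslt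
  rw [← hxy] at hge
  exact absurd (lt_of_le_of_lt hge hfin) (lt_irrefl _)
end

section
/- If K is not spherically complete, then the space ℓ∞ of bounded sequences over K with the supremum norm is not of universal disposition for the class U_FNA: there exist a one-dimensional subspace X = span(e₁) ⊆ ℓ∞, a two-dimensional non-archimedean normed space Y over K containing no two non-zero orthogonal vectors, and an isometry i : X → Y, such that no isometry f : Y → ℓ∞ satisfies f(i(x)) = x for all x ∈ X. -/
open Metric Set

open scoped ENNReal

/-- The space `ℓ∞` of bounded sequences over `K` with the supremum norm. -/
noncomputable def Linf (K : Type) [NontriviallyNormedField K] : Type :=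
  lp (fun _ : ℕ => K) ∞

noncomputable instance (K : Type) [NontriviallyNormedField K] : NormedAddCommGroup (Linf K) :=
  inferInstanceAs (NormedAddCommGroup (lp (fun _ : ℕ => K) ∞))

noncomputable instance (K : Type) [NontriviallyNormedField K] : NormedSpace K (Linf K) :=
  inferInstanceAs (NormedSpace K (lp (fun _ : ℕ => K) ∞))

/-- `e₁ = (1,0,0,…) ∈ ℓ∞`. -/
noncomputable def linfE1 (K : Type) [NontriviallyNormedField K] : Linf K :=
  lp.single ∞ 0 1

/-- A witness that `ℓ∞` is not of universal disposition for `U_FNA`: a two-dimensional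
non-archimedean normed space `Y` with no two non-zero orthogonal vectors, together with an
isometry `i : span(e₁) → Y` admitting no isometric extension `f : Y → ℓ∞` with
`f(i(x)) = x`. -/
structure LinfNotUDWitness (K : Type) [NontriviallyNormedField K] [IsUltrametricDist K] where
  Y : Type
  [nacg : NormedAddCommGroup Y]
  [nsp : NormedSpace K Y]
  [ultra : IsUltrametricDist Y]
  dim_eq : Module.finrank K Y = 2
  no_orth : ∀ x y : Y, x ≠ 0 → y ≠ 0 →
    ¬ ∀ a b : K, ‖a • x + b • y‖ = max ‖a • x‖ ‖b • y‖
  i : (Submodule.span K {linfE1 K} : Submodule K (Linf K)) →ₗ[K] Y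
  i_isom : ∀ x : (Submodule.span K {linfE1 K} : Submodule K (Linf K)), ‖i x‖ = ‖(x : Linf K)‖
  no_extension : ¬ ∃ f : Y →ₗ[K] Linf K, (∀ y : Y, ‖f y‖ = ‖y‖) ∧
    ∀ x : (Submodule.span K {linfE1 K} : Submodule K (Linf K)), f (i x) = (x : Linf K)

/-!
Take nested closed balls `B̄(cₙ, rₙ)` in `K` with empty intersection. For `(a, b) ∈ K²` the
sequence `‖a - b cₙ‖` is eventually constant (once `a / b` has left the balls), and its eventual
value `ν (a, b)` is a non-archimedean norm on `K²` extending `‖·‖` on the line `K × 0`.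
Since `⋂ₙ B̄(cₙ, rₙ) = ∅`, for every `t ∈ K` some `u` has `ν (u, 1) < ‖u - t‖` (take `u = c_N`
with `t ∉ B̄(c_N, r_N)`, so that `ν (c_N, 1) ≤ r_N`). Hence
* no functional `g` of norm `≤ 1` has `g (1, 0) = 1`: with `t = -g (0, 1)` it would give
  `‖u - t‖ = ‖g (u, 1)‖ ≤ ν (u, 1)`. Composing an isometric extension `f : K² → ℓ∞` with the first
  coordinate of `ℓ∞` would produce such a `g`;
* the functional `(a, b) ↦ b` does not attain its norm, since `ν (u, 1)` has no minimum. If `x, y`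
  were orthogonal, they would be a basis, and every functional attains its norm at `x` or `y`.
-/

open Filter IsUltrametricDist

section OrthogonalPair

variable {K E : Type*} [NontriviallyNormedField K] [NormedAddCommGroup E] [NormedSpace K E]

lemma norm_apply_mul_le_of_orthogonal [IsUltrametricDist K] (φ : E →ₗ[K] K) {x y : E}
    (H : ∀ a b : K, ‖a • x + b • y‖ = max ‖a • x‖ ‖b • y‖)
    (hxy : ‖φ y‖ * ‖x‖ ≤ ‖φ x‖ * ‖y‖) (a b : K) :
    ‖φ (a • x + b • y)‖ * ‖x‖ ≤ ‖φ x‖ * ‖a • x + b • y‖ := by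
  have ha : ‖a • φ x‖ * ‖x‖ ≤ ‖φ x‖ * ‖a • x + b • y‖ := calc
    ‖a • φ x‖ * ‖x‖ = ‖φ x‖ * ‖a • x‖ := by rw [norm_smul, norm_smul]; ring
    _ ≤ ‖φ x‖ * ‖a • x + b • y‖ := by gcongr; exact H a b ▸ le_max_left _ _
  have hb : ‖b • φ y‖ * ‖x‖ ≤ ‖φ x‖ * ‖a • x + b • y‖ := calc
    ‖b • φ y‖ * ‖x‖ = ‖b‖ * (‖φ y‖ * ‖x‖) := by rw [norm_smul]; ring
    _ ≤ ‖b‖ * (‖φ x‖ * ‖y‖) := by gcongr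
    _ = ‖φ x‖ * ‖b • y‖ := by rw [norm_smul]; ring
    _ ≤ ‖φ x‖ * ‖a • x + b • y‖ := by gcongr; exact H a b ▸ le_max_right _ _
  calc ‖φ (a • x + b • y)‖ * ‖x‖ ≤ max ‖a • φ x‖ ‖b • φ y‖ * ‖x‖ := by
        rw [map_add, map_smul, map_smul]; gcongr; exact norm_add_le_max _ _
    _ ≤ ‖φ x‖ * ‖a • x + b • y‖ := by
        rw [max_mul_of_nonneg _ _ (norm_nonneg x)]; exact max_le ha hb

lemma exists_norm_apply_mul_le_of_orthogonal [IsUltrametricDist K] (φ : E →ₗ[K] K) {x y : E}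
    (hx : x ≠ 0) (hy : y ≠ 0) (H : ∀ a b : K, ‖a • x + b • y‖ = max ‖a • x‖ ‖b • y‖) :
    ∃ z, z ≠ 0 ∧ ∀ a b : K, ‖φ (a • x + b • y)‖ * ‖z‖ ≤ ‖φ z‖ * ‖a • x + b • y‖ := by
  rcases le_total (‖φ y‖ * ‖x‖) (‖φ x‖ * ‖y‖) with h | h
  · exact ⟨x, hx, norm_apply_mul_le_of_orthogonal φ H h⟩
  · have H' (a b : K) : ‖a • y + b • x‖ = max ‖a • y‖ ‖b • x‖ := by
      rw [add_comm, max_comm, H]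
    refine ⟨y, hy, fun a b => ?_⟩
    rw [add_comm]
    exact norm_apply_mul_le_of_orthogonal φ H' h b a

lemma linearIndependent_of_orthogonal {x y : E} (hx : x ≠ 0) (hy : y ≠ 0)
    (H : ∀ a b : K, ‖a • x + b • y‖ = max ‖a • x‖ ‖b • y‖) : LinearIndependent K ![x, y] := by
  refine LinearIndependent.pair_iff.2 fun a b hab => ?_
  have hax : ‖a • x‖ ≤ 0 := by simpa [hab] using (H a b).ge.trans' (le_max_left _ _)
  have hby : ‖b • y‖ ≤ 0 := by simpa [hab] using (H a b).ge.trans' (le_max_right _ _)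
  exact ⟨(smul_eq_zero.1 (norm_le_zero_iff.1 hax)).resolve_right hx,
    (smul_eq_zero.1 (norm_le_zero_iff.1 hby)).resolve_right hy⟩

lemma not_orthogonal_of_finrank_eq_two [IsUltrametricDist K] (hE : Module.finrank K E = 2)
    (φ : E →ₗ[K] K) (hφ : ∀ z : E, z ≠ 0 → ∃ v, ‖φ z‖ * ‖v‖ < ‖φ v‖ * ‖z‖) {x y : E}
    (hx : x ≠ 0) (hy : y ≠ 0) : ¬ ∀ a b : K, ‖a • x + b • y‖ = max ‖a • x‖ ‖b • y‖ := by
  intro H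
  have hspan := (linearIndependent_of_orthogonal hx hy H).span_eq_top_of_card_eq_finrank
    (by simp [hE])
  obtain ⟨z, hz, hle⟩ := exists_norm_apply_mul_le_of_orthogonal φ hx hy H
  obtain ⟨v, hv⟩ := hφ z hz
  have hv_mem : v ∈ Submodule.span K (Set.range ![x, y]) := hspan ▸ Submodule.mem_top
  rw [Matrix.range_cons_cons_empty] at hv_mem
  obtain ⟨a, b, rfl⟩ := Submodule.mem_span_pair.1 hv_mem
  exact (hle a b).not_gt hv

end OrthogonalPair

section Linf

variable {K : Type} [NontriviallyNormedField K]

noncomputable def linfCoord0 : Linf K →ₗ[K] K := lp.evalₗ (fun _ : ℕ => K) ∞ 0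

lemma linfCoord0_linfE1 : linfCoord0 (linfE1 K) = 1 :=
  lp.single_apply_self (E := fun _ : ℕ => K) ∞ 0 1

lemma norm_linfCoord0_le (x : Linf K) : ‖linfCoord0 x‖ ≤ ‖x‖ :=
  lp.norm_apply_le_norm ENNReal.top_ne_zero (E := fun _ : ℕ => K) x 0

lemma norm_linfE1 : ‖linfE1 K‖ = 1 :=
  (lp.norm_single (E := fun _ : ℕ => K) (by simp) 0 1).trans norm_one

end Linf

structure EmptyNestedBalls (K : Type*) [NontriviallyNormedField K] where
  c : ℕ → K
  r : ℕ → ℝ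
  r_nonneg : ∀ n, 0 ≤ r n
  nested : ∀ n, closedBall (c (n + 1)) (r (n + 1)) ⊆ closedBall (c n) (r n)
  iInter_eq_empty : ⋂ n, closedBall (c n) (r n) = ∅

namespace EmptyNestedBalls

section Field

variable {K : Type*} [NontriviallyNormedField K] (B : EmptyNestedBalls K)

lemma norm_c_sub_c_le {n m : ℕ} (h : n ≤ m) : ‖B.c m - B.c n‖ ≤ B.r n := by
  have hanti : Antitone fun n => closedBall (B.c n) (B.r n) := antitone_nat_of_succ_le B.nested
  simpa [dist_eq_norm] using hanti h (mem_closedBall_self (B.r_nonneg m))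

lemma exists_mul_r_lt_norm_sub {b : K} (hb : b ≠ 0) (a : K) :
    ∃ n, ‖b‖ * B.r n < ‖a - b * B.c n‖ := by
  have : a / b ∉ ⋂ n, closedBall (B.c n) (B.r n) := by simp [B.iInter_eq_empty]
  simp only [mem_iInter, mem_closedBall, dist_eq_norm, not_forall, not_le] at this
  obtain ⟨n, hn⟩ := this
  refine ⟨n, ?_⟩
  calc ‖b‖ * B.r n < ‖b‖ * ‖a / b - B.c n‖ := by gcongr
    _ = ‖a - b * B.c n‖ := by rw [← norm_mul, mul_sub, mul_div_cancel₀ _ hb]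

/-- `limUnder` is only meaningful because, for ultrametric `K`, the sequence is eventually
constant (`eventually_nu_eq`). -/
noncomputable def nu (v : K × K) : ℝ := limUnder atTop fun n => ‖v.1 - v.2 * B.c n‖

def Plane (_ : EmptyNestedBalls K) : Type _ := K × K

instance : AddCommGroup B.Plane := inferInstanceAs (AddCommGroup (K × K))

instance : Module K B.Plane := inferInstanceAs (Module K (K × K))

instance : FiniteDimensional K B.Plane := inferInstanceAs (FiniteDimensional K (K × K))

lemma finrank_plane : Module.finrank K B.Plane = 2 :=
  (Module.finrank_prod (R := K) (M := K) (M' := K)).trans (by simp)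

def toPlane : (K × K) ≃ₗ[K] B.Plane := LinearEquiv.refl K (K × K)

noncomputable instance : Norm B.Plane := ⟨B.nu⟩

lemma norm_toPlane (v : K × K) : ‖B.toPlane v‖ = B.nu v := rfl

end Field

section Ultrametric

variable {K : Type*} [NontriviallyNormedField K] [IsUltrametricDist K] (B : EmptyNestedBalls K)

lemma norm_sub_mul_c_eq {a b : K} {n m : ℕ} (hn : ‖b‖ * B.r n < ‖a - b * B.c n‖) (h : n ≤ m) :
    ‖a - b * B.c m‖ = ‖a - b * B.c n‖ := by
  have hsmall : ‖b * (B.c n - B.c m)‖ < ‖a - b * B.c n‖ := by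
    rw [norm_mul, norm_sub_rev]
    exact hn.trans_le' (by gcongr; exact B.norm_c_sub_c_le h)
  rw [show a - b * B.c m = (a - b * B.c n) + b * (B.c n - B.c m) by ring,
    norm_add_eq_max_of_norm_ne_norm hsmall.ne', max_eq_left hsmall.le]

lemma eventually_nu_eq (v : K × K) : ∀ᶠ n in atTop, ‖v.1 - v.2 * B.c n‖ = B.nu v := by
  obtain ⟨t, ht⟩ : ∃ t, ∀ᶠ n in atTop, ‖v.1 - v.2 * B.c n‖ = t := by
    by_cases hb : v.2 = 0
    · exact ⟨‖v.1‖, by simp [hb]⟩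
    obtain ⟨N, hN⟩ := B.exists_mul_r_lt_norm_sub hb v.1
    exact ⟨_, eventually_atTop.2 ⟨N, fun m hm => B.norm_sub_mul_c_eq hN hm⟩⟩
  rwa [nu, (tendsto_nhds_of_eventually_eq ht).limUnder_eq]

lemma nu_fst (a : K) : B.nu (a, 0) = ‖a‖ := by
  obtain ⟨n, hn⟩ := (B.eventually_nu_eq (a, 0)).exists
  simpa using hn.symm

lemma nu_add_le (v w : K × K) : B.nu (v + w) ≤ max (B.nu v) (B.nu w) := by
  obtain ⟨n, hv, hw, hvw⟩ :=
    ((B.eventually_nu_eq v).and ((B.eventually_nu_eq w).and (B.eventually_nu_eq (v + w)))).exists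
  rw [← hv, ← hw, ← hvw, Prod.fst_add, Prod.snd_add,
    show v.1 + w.1 - (v.2 + w.2) * B.c n = (v.1 - v.2 * B.c n) + (w.1 - w.2 * B.c n) by ring]
  exact norm_add_le_max _ _

lemma nu_smul (k : K) (v : K × K) : B.nu (k • v) = ‖k‖ * B.nu v := by
  obtain ⟨n, hv, hkv⟩ := ((B.eventually_nu_eq v).and (B.eventually_nu_eq (k • v))).exists
  rw [← hv, ← hkv, Prod.smul_fst, Prod.smul_snd, smul_eq_mul, smul_eq_mul, ← norm_mul]
  congr 1
  ring

lemma nu_pos {v : K × K} (hv : v ≠ 0) : 0 < B.nu v := by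
  obtain ⟨a, b⟩ := v
  by_cases hb : b = 0
  · subst hb
    rw [nu_fst, norm_pos_iff]
    rintro rfl
    exact hv rfl
  obtain ⟨N, hN⟩ := B.exists_mul_r_lt_norm_sub hb a
  obtain ⟨m, hm, hNm⟩ := ((B.eventually_nu_eq (a, b)).and (eventually_ge_atTop N)).exists
  rw [← hm, B.norm_sub_mul_c_eq hN hNm]
  exact hN.trans_le' (mul_nonneg (norm_nonneg b) (B.r_nonneg N))

lemma nu_nonneg (v : K × K) : 0 ≤ B.nu v := by
  rcases eq_or_ne v 0 with rfl | hv
  · exact (B.nu_fst 0).trans_ge (norm_nonneg _)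
  · exact (B.nu_pos hv).le

lemma exists_nu_lt_norm_sub (t : K) : ∃ u, B.nu (u, 1) < ‖u - t‖ := by
  obtain ⟨N, hN⟩ := B.exists_mul_r_lt_norm_sub one_ne_zero t
  obtain ⟨m, hm, hNm⟩ := ((B.eventually_nu_eq (B.c N, 1)).and (eventually_ge_atTop N)).exists
  refine ⟨B.c N, ?_⟩
  calc B.nu (B.c N, 1) = ‖B.c m - B.c N‖ := by rw [← hm, norm_sub_rev]; simp
    _ ≤ B.r N := B.norm_c_sub_c_le hNm
    _ < ‖B.c N - t‖ := by simpa [norm_sub_rev] using hN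

lemma exists_nu_lt_nu (p : K) : ∃ u, B.nu (u, 1) < B.nu (p, 1) := by
  obtain ⟨u, hu⟩ := B.exists_nu_lt_norm_sub p
  refine ⟨u, (lt_max_iff.1 (hu.trans_le ?_)).resolve_left (lt_irrefl _)⟩
  calc ‖u - p‖ = B.nu ((u, 1) + (-1 : K) • (p, 1)) := by
        rw [← B.nu_fst]; congr 1; simp [sub_eq_add_neg]
    _ ≤ max (B.nu (u, 1)) (B.nu ((-1 : K) • (p, 1))) := B.nu_add_le _ _
    _ = max (B.nu (u, 1)) (B.nu (p, 1)) := by rw [B.nu_smul, norm_neg, norm_one, one_mul]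

lemma normedSpaceCore : NormedSpace.Core K B.Plane where
  norm_nonneg := B.nu_nonneg
  norm_smul := B.nu_smul
  norm_triangle v w :=
    (B.nu_add_le v w).trans (max_le_add_of_nonneg (B.nu_nonneg v) (B.nu_nonneg w))
  norm_eq_zero_iff v := by
    refine ⟨fun h => by_contra fun hv => (B.nu_pos hv).ne' h, ?_⟩
    rintro rfl
    exact (B.nu_fst 0).trans norm_zero

noncomputable instance : NormedAddCommGroup B.Plane := .ofCore B.normedSpaceCore

noncomputable instance : NormedSpace K B.Plane := .ofCore B.normedSpaceCore

instance : IsUltrametricDist B.Plane :=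
  isUltrametricDist_of_forall_norm_add_le_max_norm B.nu_add_le

lemma snd_not_attains_norm (z : B.Plane) (hz : z ≠ 0) :
    ∃ v, ‖(LinearMap.snd K K K ∘ₗ B.toPlane.symm.toLinearMap) z‖ * ‖v‖ <
      ‖(LinearMap.snd K K K ∘ₗ B.toPlane.symm.toLinearMap) v‖ * ‖z‖ := by
  obtain ⟨⟨a, b⟩, rfl⟩ := B.toPlane.surjective z
  have hab : ((a, b) : K × K) ≠ 0 := by simpa using hz
  by_cases hb : b = 0
  · refine ⟨B.toPlane (0, 1), ?_⟩
    simpa [hb, norm_toPlane] using B.nu_pos hab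
  obtain ⟨u, hu⟩ := B.exists_nu_lt_nu (a / b)
  refine ⟨B.toPlane (u, 1), ?_⟩
  have hz : ((a, b) : K × K) = b • ((a / b, 1) : K × K) := by simp [mul_div_cancel₀ a hb]
  simp only [LinearMap.comp_apply, LinearEquiv.coe_coe, LinearEquiv.symm_apply_apply,
    LinearMap.snd_apply, norm_toPlane, norm_one, one_mul]
  rw [hz, B.nu_smul]
  exact mul_lt_mul_of_pos_left hu (norm_pos_iff.2 hb)

lemma not_exists_extension_fst :
    ¬ ∃ g : B.Plane →ₗ[K] K, g (B.toPlane (1, 0)) = 1 ∧ ∀ v, ‖g v‖ ≤ ‖v‖ := by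
  rintro ⟨g, hg1, hg⟩
  obtain ⟨u, hu⟩ := B.exists_nu_lt_norm_sub (-g (B.toPlane (0, 1)))
  have hgu : g (B.toPlane (u, 1)) = u - -g (B.toPlane (0, 1)) := by
    have : ((u, 1) : K × K) = u • ((1, 0) : K × K) + ((0, 1) : K × K) := by simp
    rw [this, map_add, map_smul, map_add, map_smul, hg1, smul_eq_mul, mul_one, sub_neg_eq_add]
  exact hu.not_ge (hgu ▸ hg _)

end Ultrametric

section Linf

variable {K : Type} [NontriviallyNormedField K] (B : EmptyNestedBalls K)

noncomputable def inclSpanE1 : Submodule.span K {linfE1 K} →ₗ[K] B.Plane :=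
  B.toPlane.toLinearMap ∘ₗ LinearMap.inl K K K ∘ₗ linfCoord0 ∘ₗ
    (Submodule.span K {linfE1 K}).subtype

lemma inclSpanE1_e1 :
    B.inclSpanE1 ⟨linfE1 K, Submodule.mem_span_singleton_self _⟩ = B.toPlane (1, 0) := by
  simp [inclSpanE1, linfCoord0_linfE1]

variable [IsUltrametricDist K]

lemma norm_inclSpanE1 (x : Submodule.span K {linfE1 K}) :
    ‖B.inclSpanE1 x‖ = ‖(x : Linf K)‖ := by
  obtain ⟨k, hk⟩ := Submodule.mem_span_singleton.1 x.2
  obtain rfl : x = k • ⟨linfE1 K, Submodule.mem_span_singleton_self _⟩ := Subtype.ext hk.symm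
  rw [map_smul, B.inclSpanE1_e1, norm_smul, norm_toPlane, nu_fst, Submodule.coe_smul, norm_smul,
    norm_linfE1, norm_one]

lemma not_exists_isometry_extension : ¬ ∃ f : B.Plane →ₗ[K] Linf K, (∀ y, ‖f y‖ = ‖y‖) ∧
    ∀ x : Submodule.span K {linfE1 K}, f (B.inclSpanE1 x) = x := by
  rintro ⟨f, hf, hext⟩
  refine B.not_exists_extension_fst ⟨linfCoord0 ∘ₗ f, ?_, fun v => ?_⟩
  · rw [LinearMap.comp_apply, ← B.inclSpanE1_e1, hext]
    exact linfCoord0_linfE1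
  · exact (norm_linfCoord0_le (f v)).trans (hf v).le

end Linf

end EmptyNestedBalls

/-- If `K` is not spherically complete then `ℓ∞` is not of universal disposition for
`U_FNA`. -/
theorem linf_not_UD_of_not_sphericallyComplete (K : Type) [NontriviallyNormedField K]
    [IsUltrametricDist K] (hK : ¬ SphComplete K) :
    Nonempty (LinfNotUDWitness K) := by
  simp only [SphComplete, not_forall, not_nonempty_iff_eq_empty] at hK
  obtain ⟨c, r, hr, hnested, hempty⟩ := hK
  let B : EmptyNestedBalls K := ⟨c, r, hr, hnested, hempty⟩
  exact ⟨{ Y := B.Plane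
           dim_eq := B.finrank_plane
           no_orth := fun _ _ hx hy =>
             not_orthogonal_of_finrank_eq_two B.finrank_plane _ B.snd_not_attains_norm hx hy
           i := B.inclSpanE1
           i_isom := B.norm_inclSpanE1
           no_extension := B.not_exists_isometry_extension }⟩
end
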